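/- Let P be a transition probability function on a separable metric space X and let μ, μ₁ be probability measures invariant under P (i.e. μP = μ and μ₁P = μ₁), with μ₁ absolutely continuous with respect to μ. Suppose every Borel set A that is μ-invariant (i.e. P(·,A) = 1_A μ-almost everywhere) has μ(A) = 0 or μ(A) = 1. Then μ₁ = μ. -/

import Mathlib

/-!
Let `f = dμ₁/dμ` and `A = {f > 1}`. Invariance of `μ₁` and `μ` gives
`μ₁(A) = ∫ P(·,A) f dμ ≤ μ(A) + ∫ P(·,A) (f - 1)⁺ dμ`, while directly `μ₁(A) = μ(A) + ∫ (f - 1)⁺ dμ`;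
so `P(x, A) = 1` for `μ`-a.e. `x ∈ A` (using `f < ∞` a.e.). Invariance of `μ` balances the flow
into `A` against the flow out of it, so `A` is `μ`-invariant and `μ(A) ∈ {0, 1}`. Then `f ≤ 1` or `f ≥ 1` a.e., so
`μ₁ ≤ μ` or `μ ≤ μ₁`, and two probability measures comparable in this way coincide.
-/

open MeasureTheory Set
open scoped ENNReal

namespace MeasureTheory.Measure

variable {X : Type*} [MeasurableSpace X] {P : X → Measure X} {μ ν : Measure X}
  {A : Set X}

lemma lintegral_apply_eq_of_bind_eq_self (hP : Measurable P) (hμ : μ.bind P = μ)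
    (hA : MeasurableSet A) : ∫⁻ x, P x A ∂μ = μ A := by
  conv_rhs => rw [← hμ]
  exact (bind_apply hA hP.aemeasurable).symm

/-- Under an invariant measure the flow out of `A` equals the flow into `A`. -/
lemma ae_apply_eq_indicator_of_ae_apply_eq_one [IsFiniteMeasure μ] (hP : Measurable P)
    (hμ : μ.bind P = μ) (hA : MeasurableSet A) (hstay : ∀ᵐ x ∂μ, x ∈ A → P x A = 1) :
    ∀ᵐ x ∂μ, P x A = A.indicator (fun _ => 1) x := by
  have hPA : Measurable fun x => P x A := (measurable_coe hA).comp hP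
  have hin : ∫⁻ x in A, P x A ∂μ = μ A := by
    rw [← setLIntegral_one]
    exact setLIntegral_congr_fun_ae hA hstay
  have hout : ∫⁻ x in Aᶜ, P x A ∂μ = 0 := by
    have hsplit := lintegral_add_compl (fun x => P x A) (μ := μ) hA
    rw [lintegral_apply_eq_of_bind_eq_self hP hμ hA, hin] at hsplit
    exact (ENNReal.add_right_inj (measure_ne_top μ A)).mp (hsplit.trans (add_zero _).symm)
  have hout_ae : ∀ᵐ x ∂μ, x ∈ Aᶜ → P x A = 0 :=
    (ae_restrict_iff' hA.compl).mp ((lintegral_eq_zero_iff hPA).mp hout)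
  filter_upwards [hstay, hout_ae] with x hx_in hx_out
  by_cases hx : x ∈ A
  · rw [indicator_of_mem hx, hx_in hx]
  · rw [indicator_of_notMem hx, hx_out hx]

lemma ae_apply_setOf_one_lt_eq_one [∀ x, IsProbabilityMeasure (P x)] [IsFiniteMeasure μ]
    [IsFiniteMeasure ν] (hP : Measurable P) (hμ : μ.bind P = μ) (hν : ν.bind P = ν)
    {f : X → ℝ≥0∞} (hf : Measurable f) (hνf : μ.withDensity f = ν) :
    ∀ᵐ x ∂μ, 1 < f x → P x {y | 1 < f y} = 1 := by
  set A := {y | 1 < f y}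
  have hA : MeasurableSet A := measurableSet_lt measurable_const hf
  set h : X → ℝ≥0∞ := fun x => P x A
  have hh : Measurable h := (measurable_coe hA).comp hP
  set g : X → ℝ≥0∞ := fun x => f x - 1
  have hg : Measurable g := hf.sub measurable_const
  have hνA_upper : ν A ≤ μ A + ∫⁻ x, h x * g x ∂μ := calc
    ν A = ∫⁻ x, f x * h x ∂μ := by
      rw [← lintegral_apply_eq_of_bind_eq_self hP hν hA, ← hνf,
        lintegral_withDensity_eq_lintegral_mul μ hf hh]
      rfl
    _ ≤ ∫⁻ x, (h x + h x * g x) ∂μ := lintegral_mono fun x => by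
      rw [mul_comm, ← mul_one_add]
      exact mul_le_mul_right le_add_tsub _
    _ = μ A + ∫⁻ x, h x * g x ∂μ := by
      rw [lintegral_add_left hh, lintegral_apply_eq_of_bind_eq_self hP hμ hA]
  have hνA_eq : ν A = μ A + ∫⁻ x, g x ∂μ := calc
    ν A = ∫⁻ x in A, (1 + g x) ∂μ := by
      rw [← hνf, withDensity_apply _ hA]
      exact setLIntegral_congr_fun hA fun x hx => (add_tsub_cancel_of_le hx.le).symm
    _ = μ A + ∫⁻ x in A, g x ∂μ := by rw [lintegral_add_left measurable_const, setLIntegral_one]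
    _ = μ A + ∫⁻ x, g x ∂μ := by
      rw [setLIntegral_eq_of_support_subset (s := A)
        fun x hx => tsub_pos_iff_lt.mp (pos_iff_ne_zero.mpr hx)]
  have hhg_le : ∀ x, h x * g x ≤ g x := fun x => mul_le_of_le_one_left' prob_le_one
  have hg_int_fin : ∫⁻ x, g x ∂μ ≠ ∞ :=
    ne_top_of_le_ne_top (measure_ne_top ν A) (hνA_eq ▸ le_add_self)
  have hhg_eq : (fun x => h x * g x) =ᵐ[μ] g :=
    ae_eq_of_ae_le_of_lintegral_le (ae_of_all _ hhg_le)
      (ne_top_of_le_ne_top hg_int_fin (lintegral_mono hhg_le)) hg.aemeasurable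
      ((ENNReal.add_le_add_iff_left (measure_ne_top μ A)).mp (hνA_eq ▸ hνA_upper))
  have hg_fin : ∀ᵐ x ∂μ, g x < ∞ := ae_lt_top hg hg_int_fin
  filter_upwards [hhg_eq, hg_fin] with x hx hx_fin hx_lt
  exact (ENNReal.mul_left_inj (tsub_pos_iff_lt.mpr hx_lt).ne' hx_fin.ne).mp
    (hx.trans (one_mul _).symm)

end MeasureTheory.Measure

open MeasureTheory.Measure

theorem stmt0 {X : Type*}
    [MeasurableSpace X]
    (P : X → Measure X) (hPprob : ∀ x, IsProbabilityMeasure (P x)) (hPmeas : Measurable P)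
    (μ μ₁ : Measure X) [IsProbabilityMeasure μ] [IsProbabilityMeasure μ₁]
    (hinv : μ.bind P = μ) (hinv₁ : μ₁.bind P = μ₁) (habs : μ₁ ≪ μ)
    (herg : ∀ A : Set X, MeasurableSet A →
      (∀ᵐ x ∂μ, P x A = A.indicator (fun _ => (1 : ℝ≥0∞)) x) → μ A = 0 ∨ μ A = 1) :
    μ₁ = μ := by
  obtain ⟨f, hf, hμ₁⟩ : ∃ f, Measurable f ∧ μ.withDensity f = μ₁ :=
    ⟨_, measurable_rnDeriv μ₁ μ, withDensity_rnDeriv_eq μ₁ μ habs⟩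
  have hA : MeasurableSet {x | 1 < f x} := measurableSet_lt measurable_const hf
  have hstay := ae_apply_setOf_one_lt_eq_one hPmeas hinv hinv₁ hf hμ₁
  rcases herg _ hA (ae_apply_eq_indicator_of_ae_apply_eq_one hPmeas hinv hA hstay)
    with hnull | hfull
  · have hf_le : f ≤ᵐ[μ] 1 := by
      filter_upwards [measure_eq_zero_iff_ae_notMem.mp hnull] with x hx using not_lt.mp hx
    refine eq_of_le_of_isProbabilityMeasure ?_
    calc μ₁ = μ.withDensity f := hμ₁.symm
      _ ≤ μ.withDensity 1 := withDensity_mono hf_le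
      _ = μ := withDensity_one
  · have hf_ge : 1 ≤ᵐ[μ] f := by
      have : ∀ᵐ x ∂μ, 1 < f x := (ae_iff_measure_eq hA.nullMeasurableSet).mpr (by simpa)
      filter_upwards [this] with x hx using hx.le
    refine (eq_of_le_of_isProbabilityMeasure ?_).symm
    calc μ = μ.withDensity 1 := withDensity_one.symm
      _ ≤ μ.withDensity f := withDensity_mono hf_ge
      _ = μ₁ := hμ₁
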